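/- Let G act on an additive category A. Then the induction functor Ind : A → A^G is separable. If moreover |G| is invertible in A (meaning every morphism is uniquely divisible by |G|), then the forgetful functor ω : A^G → A is separable. -/

import Mathlib

open CategoryTheory Limits
universe v u
variable {G : Type*} [Group G] {A : Type u} [Category.{v} A]

structure GAction (G : Type*) [Group G] (A : Type u) [Category.{v} A] where
  F : G → A ⥤ A
  equiv : ∀ g, (F g).IsEquivalence
  δ : ∀ g h : G, F h ⋙ F g ≅ F (h * g)
  cocycle : ∀ (g h l : G) (X : A),
    (F g).map ((δ h l).hom.app X) ≫ (δ g (l * h)).hom.app X ≫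
      eqToHom (congrArg (fun m => (F m).obj X) (mul_assoc l h g)) =
    (δ g h).hom.app ((F l).obj X) ≫ (δ (h * g) l).hom.app X

structure EqObj (act : GAction G A) where
  obj : A
  lam : ∀ g : G, (act.F g).obj obj ≅ obj
  compat : ∀ g h : G,
    (act.F g).map (lam h).hom ≫ (lam g).hom =
      (act.δ g h).hom.app obj ≫ (lam (h * g)).hom

namespace EqObj

variable {act : GAction G A}

@[ext]
structure EqHom (X Y : EqObj act) where
  f : X.obj ⟶ Y.obj
  comm : ∀ g : G, (act.F g).map f ≫ (Y.lam g).hom = (X.lam g).hom ≫ f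

instance : Category (EqObj act) where
  Hom := EqHom
  id X := ⟨𝟙 X.obj, by intro g; simp⟩
  comp {X Y Z} u v := ⟨u.f ≫ v.f, by
    intro g
    rw [Functor.map_comp, Category.assoc, v.comm, ← Category.assoc, u.comm, Category.assoc]⟩

@[ext]
lemma hom_ext {X Y : EqObj act} {u v : X ⟶ Y} (h : u.f = v.f) : u = v := EqHom.ext h

@[simp] lemma id_f (X : EqObj act) : (𝟙 X : X ⟶ X).f = 𝟙 X.obj := rfl
@[simp] lemma comp_f {X Y Z : EqObj act} (u : X ⟶ Y) (v : Y ⟶ Z) :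
    (u ≫ v).f = u.f ≫ v.f := rfl

@[simps]
def forget (act : GAction G A) : EqObj act ⥤ A where
  obj X := X.obj
  map u := u.f

section Preadditive

variable [Preadditive A] [∀ g : G, (act.F g).Additive]

instance instAddHom (X Y : EqObj act) : Add (X ⟶ Y) :=
  ⟨fun u v => ⟨u.f + v.f, fun g => by
    simp [Preadditive.add_comp, Preadditive.comp_add, u.comm g, v.comm g]⟩⟩

instance instZeroHom (X Y : EqObj act) : Zero (X ⟶ Y) :=
  ⟨⟨0, fun g => by simp⟩⟩

instance instNegHom (X Y : EqObj act) : Neg (X ⟶ Y) :=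
  ⟨fun u => ⟨-u.f, fun g => by
    simp [Preadditive.neg_comp, Preadditive.comp_neg, u.comm g]⟩⟩

instance homAddCommGroup (X Y : EqObj act) : AddCommGroup (X ⟶ Y) where
  add := (· + ·)
  zero := 0
  neg := Neg.neg
  add_assoc := fun a b c => hom_ext (add_assoc a.f b.f c.f)
  zero_add := fun a => hom_ext (zero_add a.f)
  add_zero := fun a => hom_ext (add_zero a.f)
  nsmul := nsmulRec
  zsmul := zsmulRec
  neg_add_cancel := fun a => hom_ext (neg_add_cancel a.f)
  add_comm := fun a b => hom_ext (add_comm a.f b.f)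

instance : Preadditive (EqObj act) where
  homGroup := homAddCommGroup
  add_comp _ _ _ f f' g := hom_ext (Preadditive.add_comp _ _ _ f.f f'.f g.f)
  comp_add _ _ _ f g g' := hom_ext (Preadditive.comp_add _ _ _ f.f g.f g'.f)

@[simp] lemma add_f {X Y : EqObj act} (u v : X ⟶ Y) : (u + v).f = u.f + v.f := rfl
@[simp] lemma zero_f (X Y : EqObj act) : (0 : X ⟶ Y).f = 0 := rfl

instance : (forget act).Additive where
  map_add := rfl

end Preadditive

end EqObj

/-- A functor is *separable* if the induced transformation on hom-sets admits a natural
retraction. -/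
def CategoryTheory.Functor.Separable {C : Type*} [Category C] {B : Type*} [Category B]
    (F : C ⥤ B) : Prop :=
  ∃ Φ : ∀ X Y : C, (F.obj X ⟶ F.obj Y) → (X ⟶ Y),
    (∀ (X Y : C) (f : X ⟶ Y), Φ X Y (F.map f) = f) ∧
    (∀ (X' X Y Y' : C) (u : X' ⟶ X) (v : Y ⟶ Y') (h : F.obj X ⟶ F.obj Y),
      Φ X' Y' (F.map u ≫ h ≫ F.map v) = u ≫ Φ X Y h ≫ v)

/-- `n` is invertible in an additive category `A` if every morphism is uniquely divisible
by `n`. -/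
def NatInvertibleIn (n : ℕ) (A : Type u) [Category.{v} A] [Preadditive A] : Prop :=
  ∀ ⦃X Y : A⦄ (f : X ⟶ Y), ∃! g : X ⟶ Y, n • g = f

/-- A functor `A ⥤ A^G` *is the induction functor* if its composite with the forgetful
functor is naturally isomorphic to `X ↦ ⊕_{g ∈ G} F_g(X)`. -/
def IsInduction [Preadditive A] [HasFiniteBiproducts A] [Fintype G] (act : GAction G A)
    (Ind : A ⥤ EqObj act) : Prop :=
  ∃ iso : ∀ X : A, (EqObj.forget act).obj (Ind.obj X) ≅ ⨁ (fun g : G => (act.F g).obj X),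
    ∀ (X Y : A) (f : X ⟶ Y),
      (EqObj.forget act).map (Ind.map f) ≫ (iso Y).hom =
        (iso X).hom ≫ biproduct.map (fun g => (act.F g).map f)

/-!
`Ind X` is `⨁_g F_g X`, where `λ_g` sends the summand `F_g F_l X` to `F_{lg} X` through `δ`.
`Ind` is both left and right adjoint to `ω`; all four units and counits are built from the
inclusion or projection of the summand `g = 1` (with `F_1 ≅ 𝟭`) and from the maps `λ_g^{±1}`.
The composite `X → ω Ind X → X` is the identity, while `Y → Ind ω Y → Y` is
`∑_g λ_g⁻¹ ≫ λ_g = |G| • 𝟙`. A functor `F` admitting natural maps `𝟭 → R F → 𝟭` composing to the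
identity is separable, with retraction `h ↦ η ≫ R h ≫ ν`; when the composite is `n • 𝟙`, divide
`ν` by `n`, which is possible in `A^G` as soon as it is possible in `A`.
-/

namespace NatInvertibleIn

variable {n : ℕ} {C : Type*} [Category C] [Preadditive C]

lemma nsmul_cancel (hn : NatInvertibleIn n C) {X Y : C} {f g : X ⟶ Y} (h : n • f = n • g) :
    f = g :=
  (hn (n • g)).unique h rfl

noncomputable def div (hn : NatInvertibleIn n C) {X Y : C} (f : X ⟶ Y) : X ⟶ Y :=
  (hn f).exists.choose

@[simp]
lemma nsmul_div (hn : NatInvertibleIn n C) {X Y : C} (f : X ⟶ Y) : n • hn.div f = f :=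
  (hn f).exists.choose_spec

@[simps]
noncomputable def divNatTrans (hn : NatInvertibleIn n C) {D : Type*} [Category D] {F F' : D ⥤ C}
    (α : F ⟶ F') : F ⟶ F' where
  app X := hn.div (α.app X)
  naturality X Y f := hn.nsmul_cancel <| by
    rw [← Preadditive.comp_nsmul, ← Preadditive.nsmul_comp, nsmul_div, nsmul_div, α.naturality]

end NatInvertibleIn

namespace CategoryTheory.Functor

variable {C D : Type*} [Category C] [Category D] {F : C ⥤ D}

theorem separable_of_retraction (R : D ⥤ C) (η : 𝟭 C ⟶ F ⋙ R) (ν : F ⋙ R ⟶ 𝟭 C)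
    (hην : ∀ X, η.app X ≫ ν.app X = 𝟙 X) : F.Separable := by
  refine ⟨fun X Y h => η.app X ≫ R.map h ≫ ν.app Y, fun X Y f => ?_,
    fun X' X Y Y' u v h => ?_⟩
  · simpa [hην] using (η.naturality_assoc f (ν.app Y)).symm
  · have hu := η.naturality_assoc u (R.map h ≫ ν.app Y ≫ v)
    have hv := ν.naturality v
    dsimp at hu hv
    simp only [Functor.map_comp, Category.assoc, hv]
    exact hu.symm

theorem separable_of_nsmul_retraction [Preadditive C] {n : ℕ} (hn : NatInvertibleIn n C)
    (R : D ⥤ C) (η : 𝟭 C ⟶ F ⋙ R) (ν : F ⋙ R ⟶ 𝟭 C)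
    (hην : ∀ X, η.app X ≫ ν.app X = n • 𝟙 X) : F.Separable :=
  separable_of_retraction R η (hn.divNatTrans ν) fun X =>
    hn.nsmul_cancel (by simp [← Preadditive.comp_nsmul, hην])

end CategoryTheory.Functor

section MapBiproduct

variable {C D : Type*} [Category C] [Category D] [Preadditive C] [Preadditive D] (F : C ⥤ D)
  [F.Additive] {J : Type*} [Fintype J] (f : J → C) [HasBiproduct f]

/-- Mathlib's `preservesFiniteBiproductsOfAdditive` only covers index types in `Type`. -/
instance CategoryTheory.Functor.preservesBiproduct_of_additive : PreservesBiproduct f F where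
  preserves {b} hb := ⟨isBilimitOfTotal _ (by
    change ∑ j, F.map (b.π j) ≫ F.map (b.ι j) = 𝟙 (F.obj b.pt)
    simp only [← F.map_comp, ← F.map_sum, IsBilimit.total hb, F.map_id])⟩

/-- `biproduct.lift_desc` for index types in an arbitrary universe. -/
lemma biproduct.lift_desc_eq_sum {T U : C} (p : ∀ j, T ⟶ f j) (q : ∀ j, f j ⟶ U) :
    biproduct.lift p ≫ biproduct.desc q = ∑ j, p j ≫ q j := by
  rw [← Category.id_comp (biproduct.desc q), ← IsBilimit.total (biproduct.isBilimit f)]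
  simp [Preadditive.sum_comp, Preadditive.comp_sum]

lemma ι_mapBiproduct_inv (j : J) :
    biproduct.ι (F.obj ∘ f) j ≫ (F.mapBiproduct f).inv = F.map (biproduct.ι f j) := by
  rw [Functor.mapBiproduct_inv, biproduct.ι_desc]

lemma map_ι_mapBiproduct_hom (j : J) :
    F.map (biproduct.ι f j) ≫ (F.mapBiproduct f).hom = biproduct.ι (F.obj ∘ f) j := by
  rw [← ι_mapBiproduct_inv, Category.assoc, Iso.inv_hom_id, Category.comp_id]

lemma mapBiproduct_inv_map_π (j : J) :
    (F.mapBiproduct f).inv ≫ F.map (biproduct.π f j) = biproduct.π (F.obj ∘ f) j := by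
  rw [Iso.inv_comp_eq, Functor.mapBiproduct_hom]
  exact (biproduct.lift_π (fun j => F.map (biproduct.π f j)) j).symm

lemma CategoryTheory.Functor.hom_ext_of_map_ι {Z : D} {a b : F.obj (⨁ f) ⟶ Z}
    (h : ∀ j, F.map (biproduct.ι f j) ≫ a = F.map (biproduct.ι f j) ≫ b) : a = b := by
  rw [← cancel_epi (F.mapBiproduct f).inv]
  refine biproduct.hom_ext' _ _ fun j => ?_
  rw [reassoc_of% ι_mapBiproduct_inv, reassoc_of% ι_mapBiproduct_inv]
  exact h j

end MapBiproduct

namespace GAction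

variable (act : GAction G A)

lemma δ_hom_naturality (g l : G) {X Y : A} (f : X ⟶ Y) :
    (act.F g).map ((act.F l).map f) ≫ (act.δ g l).hom.app Y =
      (act.δ g l).hom.app X ≫ (act.F (l * g)).map f :=
  (act.δ g l).hom.naturality f

lemma δ_hom_app_congr (g : G) {l l' : G} (e : l = l') (X : A) :
    (act.δ g l).hom.app X =
      eqToHom (by rw [e]) ≫ (act.δ g l').hom.app X ≫ eqToHom (by rw [e]) := by
  subst e; simp

/-- `δ 1 1 : F_1 ⋙ F_1 ≅ F_1` and `F_1` is fully faithful, so `F_1 ≅ 𝟭`. -/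
noncomputable def oneIso : act.F 1 ≅ 𝟭 A :=
  have := act.equiv 1
  ((Functor.FullyFaithful.ofFullyFaithful (act.F 1)).whiskeringRight A).preimageIso
    (act.δ 1 1 ≪≫ eqToIso (congrArg act.F (mul_one 1)) ≪≫ (act.F 1).leftUnitor.symm)

lemma map_oneIso_hom_app (X : A) :
    (act.F 1).map (act.oneIso.hom.app X) = (act.δ 1 1).hom.app X ≫ eqToHom (by simp) := by
  have := act.equiv 1
  simp [oneIso, eqToHom_app]

lemma δ_hom_app_one (k : G) (X : A) :
    (act.δ k 1).hom.app X = (act.F k).map (act.oneIso.hom.app X) ≫ eqToHom (by simp) := by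
  obtain ⟨g, rfl⟩ : ∃ g : G, k = 1 * g := ⟨k, (one_mul k).symm⟩
  have hδ := act.δ_hom_naturality g 1 (act.oneIso.hom.app X)
  have hc := act.cocycle g 1 1 X
  rw [map_oneIso_hom_app] at hδ
  rw [δ_hom_app_congr act g (mul_one 1) X] at hc
  rw [← cancel_epi ((act.δ g 1).hom.app ((act.F 1).obj X)), ← hc, ← reassoc_of% hδ]
  simp [eqToHom_map]

@[simp]
lemma δ_inv_app_one (k : G) (X : A) :
    (act.δ k 1).inv.app X ≫ (act.F k).map (act.oneIso.hom.app X) = eqToHom (by simp) := by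
  rw [← Iso.app_inv, Iso.inv_comp_eq, Iso.app_hom, δ_hom_app_one]
  simp

end GAction

namespace EqObj

variable {act : GAction G A}

lemma lam_hom_congr (Y : EqObj act) {g g' : G} (e : g = g') :
    (Y.lam g).hom = eqToHom (by rw [e]) ≫ (Y.lam g').hom := by
  subst e; simp

lemma lam_one_hom (Y : EqObj act) : (Y.lam 1).hom = act.oneIso.hom.app Y.obj := by
  have := act.equiv 1
  apply (act.F 1).map_injective
  rw [act.map_oneIso_hom_app, ← cancel_mono (Y.lam 1).hom, Y.compat 1 1,
    Y.lam_hom_congr (mul_one 1)]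
  simp

lemma map_lam_inv_δ_hom (Y : EqObj act) (g l : G) :
    (act.F g).map (Y.lam l).inv ≫ (act.δ g l).hom.app Y.obj =
      (Y.lam g).hom ≫ (Y.lam (l * g)).inv := by
  rw [← cancel_mono (Y.lam (l * g)).hom, Category.assoc, Category.assoc, ← Y.compat g l,
    ← Functor.map_comp_assoc]
  simp

lemma lam_inv_map {X Y : EqObj act} (u : X ⟶ Y) (g : G) :
    (X.lam g).inv ≫ (act.F g).map u.f = u.f ≫ (Y.lam g).inv := by
  rw [Iso.inv_comp_eq, ← reassoc_of% (u.comm g), Iso.hom_inv_id, Category.comp_id]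

variable [Preadditive A] [∀ g : G, (act.F g).Additive]

@[simp]
lemma nsmul_f {X Y : EqObj act} (n : ℕ) (u : X ⟶ Y) : (n • u).f = n • u.f :=
  (forget act).map_nsmul

lemma natInvertibleIn {n : ℕ} (hn : NatInvertibleIn n A) : NatInvertibleIn n (EqObj act) :=
  fun X Y u => by
    refine ⟨⟨hn.div u.f, fun g => hn.nsmul_cancel ?_⟩, hom_ext (by simp), fun v hv => ?_⟩
    · rw [← Preadditive.nsmul_comp, ← Functor.map_nsmul, ← Preadditive.comp_nsmul,
        NatInvertibleIn.nsmul_div, u.comm]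
    · exact hom_ext (hn.nsmul_cancel (by rw [← nsmul_f, hv, NatInvertibleIn.nsmul_div]))

end EqObj

namespace GAction

section Induction

variable [Preadditive A] [HasFiniteBiproducts A] [Fintype G] (act : GAction G A)

noncomputable def indUnit (X : A) : X ⟶ ⨁ fun k : G => (act.F k).obj X :=
  act.oneIso.inv.app X ≫ biproduct.ι (fun k => (act.F k).obj X) 1

noncomputable def indCounit (X : A) : (⨁ fun k : G => (act.F k).obj X) ⟶ X :=
  biproduct.π _ 1 ≫ act.oneIso.hom.app X

lemma indUnit_naturality {X Y : A} (f : X ⟶ Y) :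
    f ≫ act.indUnit Y = act.indUnit X ≫ biproduct.map fun g => (act.F g).map f := by
  simp only [indUnit, Category.assoc, biproduct.ι_map]
  exact act.oneIso.inv.naturality_assoc f _

lemma indCounit_naturality {X Y : A} (f : X ⟶ Y) :
    (biproduct.map fun g => (act.F g).map f) ≫ act.indCounit Y = act.indCounit X ≫ f := by
  simp [indCounit]

lemma indUnit_indCounit (X : A) : act.indUnit X ≫ act.indCounit X = 𝟙 X := by
  simp [indUnit, indCounit]

variable [∀ g : G, (act.F g).Additive]

section Lam

variable (g : G) (X : A)

noncomputable def indLamHom :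
    (act.F g).obj (⨁ fun k : G => (act.F k).obj X) ⟶ ⨁ fun k : G => (act.F k).obj X :=
  ((act.F g).mapBiproduct _).hom ≫
    biproduct.desc fun l => (act.δ g l).hom.app X ≫ biproduct.ι (fun k => (act.F k).obj X) (l * g)

noncomputable def indLamInv :
    (⨁ fun k : G => (act.F k).obj X) ⟶ (act.F g).obj (⨁ fun k : G => (act.F k).obj X) :=
  (biproduct.lift (f := (act.F g).obj ∘ fun k => (act.F k).obj X) fun l =>
    biproduct.π (fun k => (act.F k).obj X) (l * g) ≫ (act.δ g l).inv.app X) ≫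
    ((act.F g).mapBiproduct _).inv

variable {g X}

@[simp]
lemma map_ι_indLamHom (l : G) :
    (act.F g).map (biproduct.ι _ l) ≫ act.indLamHom g X =
      (act.δ g l).hom.app X ≫ biproduct.ι (fun k : G => (act.F k).obj X) (l * g) := by
  rw [indLamHom, reassoc_of% map_ι_mapBiproduct_hom]
  exact biproduct.ι_desc _ _

@[simp]
lemma ι_indLamInv (l : G) :
    biproduct.ι _ (l * g) ≫ act.indLamInv g X =
      (act.δ g l).inv.app X ≫ (act.F g).map (biproduct.ι (fun k : G => (act.F k).obj X) l) := by
  rw [indLamInv, ← ι_mapBiproduct_inv, ← Category.assoc, ← Category.assoc, cancel_mono]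
  ext m
  by_cases hlm : l = m
  · subst hlm; simp
  · simp [biproduct.ι_π_ne _ hlm, biproduct.ι_π_ne_assoc _ (mul_right_cancel.mt hlm)]

lemma indLamInv_map_π (l : G) :
    act.indLamInv g X ≫ (act.F g).map (biproduct.π (fun k : G => (act.F k).obj X) l) =
      biproduct.π _ (l * g) ≫ (act.δ g l).inv.app X := by
  rw [indLamInv, Category.assoc, mapBiproduct_inv_map_π]
  exact biproduct.lift_π _ _

variable (g X)

@[simps]
noncomputable def indLam :
    (act.F g).obj (⨁ fun k : G => (act.F k).obj X) ≅ ⨁ fun k : G => (act.F k).obj X where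
  hom := act.indLamHom g X
  inv := act.indLamInv g X
  hom_inv_id := Functor.hom_ext_of_map_ι (act.F g) _ fun l => by
    simp [reassoc_of% map_ι_indLamHom]
  inv_hom_id := biproduct.hom_ext' _ _ fun k => by
    obtain ⟨l, rfl⟩ : ∃ l, l * g = k := ⟨k * g⁻¹, by group⟩
    simp [reassoc_of% ι_indLamInv]

lemma indLamHom_π (l : G) :
    act.indLamHom g X ≫ biproduct.π _ (l * g) =
      (act.F g).map (biproduct.π (fun k : G => (act.F k).obj X) l) ≫ (act.δ g l).hom.app X := by
  rw [← indLam_hom, ← Iso.eq_inv_comp, indLam_inv, reassoc_of% indLamInv_map_π, Iso.inv_hom_id_app,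
    Category.comp_id]

end Lam

/-- `indObj` and `ind` are reducible, so that rewriting sees `(act.ind.obj X).obj` as the
biproduct. -/
noncomputable abbrev indObj (X : A) : EqObj act where
  obj := ⨁ fun k : G => (act.F k).obj X
  lam g := act.indLam g X
  compat g h := Functor.hom_ext_of_map_ι (act.F h ⋙ act.F g) _ fun l => by
    -- on the summand `l`, both sides are `δ`-composites equated by the cocycle identity
    have hδ := (act.δ g h).hom.naturality_assoc (biproduct.ι (fun k => (act.F k).obj X) l)
      (act.indLamHom (h * g) X)
    dsimp at hδ ⊢
    rw [← Functor.map_comp_assoc]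
    simp only [indLam_hom, map_ι_indLamHom, Functor.map_comp, Category.assoc, hδ]
    rw [← biproduct.eqToHom_comp_ι _ (mul_assoc l h g), reassoc_of% act.cocycle g h l X]

noncomputable abbrev ind : A ⥤ EqObj act where
  obj := act.indObj
  map {X Y} f :=
    { f := biproduct.map fun g => (act.F g).map f
      comm h := Functor.hom_ext_of_map_ι (act.F h) _ fun l => by
        simp only [indLam_hom]
        rw [← Functor.map_comp_assoc, biproduct.ι_map, Functor.map_comp_assoc, map_ι_indLamHom,
          reassoc_of% δ_hom_naturality, reassoc_of% map_ι_indLamHom, biproduct.ι_map] }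
  map_id X := by ext1; exact biproduct.hom_ext' _ _ fun g => by simp
  map_comp f g := by ext1; exact biproduct.hom_ext' _ _ fun g => by simp

@[simps]
noncomputable def ofInd (Y : EqObj act) : act.ind.obj Y.obj ⟶ Y where
  f := biproduct.desc fun g => (Y.lam g).hom
  comm h := Functor.hom_ext_of_map_ι (act.F h) _ fun l => by
    simp [← Functor.map_comp_assoc, Y.compat, reassoc_of% map_ι_indLamHom]

@[simps]
noncomputable def toInd (Y : EqObj act) : Y ⟶ act.ind.obj Y.obj where
  f := biproduct.lift fun g => (Y.lam g).inv
  comm h := biproduct.hom_ext _ _ fun k => by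
    obtain ⟨l, rfl⟩ : ∃ l, l * h = k := ⟨k * h⁻¹, by group⟩
    simp only [indLam_hom, Category.assoc, indLamHom_π, biproduct.lift_π]
    rw [← Functor.map_comp_assoc, biproduct.lift_π, Y.map_lam_inv_δ_hom]

lemma ind_map_ofInd {Y Y' : EqObj act} (u : Y ⟶ Y') :
    act.ind.map u.f ≫ act.ofInd Y' = act.ofInd Y ≫ u := by
  ext1
  exact biproduct.hom_ext' _ _ fun g => by simp [u.comm]

lemma toInd_ind_map {Y Y' : EqObj act} (u : Y ⟶ Y') :
    u ≫ act.toInd Y' = act.toInd Y ≫ act.ind.map u.f := by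
  ext1
  exact biproduct.hom_ext _ _ fun g => by simp [EqObj.lam_inv_map]

lemma toInd_ofInd (Y : EqObj act) : act.toInd Y ≫ act.ofInd Y = Fintype.card G • 𝟙 Y := by
  ext1
  simp [biproduct.lift_desc_eq_sum]

lemma ind_map_indUnit_ofInd (X : A) :
    act.ind.map (act.indUnit X) ≫ act.ofInd (act.ind.obj X) = 𝟙 _ := by
  ext1
  refine biproduct.hom_ext' _ _ fun g => ?_
  simp [indUnit, δ_hom_app_one]
  exact biproduct.eqToHom_comp_ι (fun k => (act.F k).obj X) (one_mul g).symm

lemma indUnit_ofInd (Y : EqObj act) : act.indUnit Y.obj ≫ (act.ofInd Y).f = 𝟙 Y.obj := by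
  simp [indUnit, EqObj.lam_one_hom]

lemma toInd_indCounit (Y : EqObj act) : (act.toInd Y).f ≫ act.indCounit Y.obj = 𝟙 Y.obj := by
  simp [indCounit, ← EqObj.lam_one_hom]

lemma toInd_ind_map_indCounit (X : A) :
    act.toInd (act.ind.obj X) ≫ act.ind.map (act.indCounit X) = 𝟙 _ := by
  ext1
  refine biproduct.hom_ext _ _ fun g => ?_
  simp [indCounit, reassoc_of% indLamInv_map_π]

noncomputable def indForgetAdj : act.ind ⊣ EqObj.forget act where
  unit := { app := act.indUnit, naturality _ _ := act.indUnit_naturality }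
  counit := { app := act.ofInd, naturality _ _ := act.ind_map_ofInd }
  left_triangle_components := act.ind_map_indUnit_ofInd
  right_triangle_components := act.indUnit_ofInd

noncomputable def forgetIndAdj : EqObj.forget act ⊣ act.ind where
  unit := { app := act.toInd, naturality _ _ := act.toInd_ind_map }
  counit := { app := act.indCounit, naturality _ _ := act.indCounit_naturality }
  left_triangle_components := act.toInd_indCounit
  right_triangle_components := act.toInd_ind_map_indCounit

end Induction

end GAction

/-- The induction functor `Ind : A → A^G` is separable; if `|G|` is invertible in `A`,
then the forgetful functor `ω : A^G → A` is separable. -/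
theorem induction_and_forget_separable
    [Preadditive A] [HasFiniteBiproducts A] [Fintype G] (act : GAction G A)
    [∀ g : G, (act.F g).Additive] :
    (∃ (Ind : A ⥤ EqObj act) (_ : IsInduction act Ind)
        (adj₁ : Ind ⊣ EqObj.forget act) (adj₂ : EqObj.forget act ⊣ Ind),
        (∀ X : A, adj₁.unit.app X ≫ adj₂.counit.app X = 𝟙 X) ∧
        Ind.Separable) ∧
    (NatInvertibleIn (Fintype.card G) A → (EqObj.forget act).Separable) := by
  have isInduction : IsInduction act act.ind :=
    ⟨fun X => Iso.refl _, fun X Y f => (Category.comp_id _).trans (Category.id_comp _).symm⟩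
  refine ⟨⟨act.ind, isInduction, act.indForgetAdj, act.forgetIndAdj, act.indUnit_indCounit, ?_⟩,
    fun hG => ?_⟩
  · exact Functor.separable_of_retraction _ act.indForgetAdj.unit act.forgetIndAdj.counit
      act.indUnit_indCounit
  · exact Functor.separable_of_nsmul_retraction (EqObj.natInvertibleIn hG) _
      act.forgetIndAdj.unit act.indForgetAdj.counit act.toInd_ofInd
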